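/- arXiv:1311.1893 — 3 statements merged into one kernel-verified Lean document; each statement's English description precedes it below -/
import Mathlib

section
/- For every g ∈ L²(P0) with ∫ g dP0 = 0, the curve ℝ → M₁(Ω,𝒜), t ↦ P_{tg}, where P_{tg} := c(tg)^{−1}(1 + tg/2)² · P0 and c(tg) = ∫ (1 + tg/2)² dP0, is L²(P0)-differentiable with tangent g. -/
open MeasureTheory Filter Set

noncomputable section

namespace Semipar

variable {Ω : Type*} [MeasurableSpace Ω]

/-- `t ↦ P t` is an `L²(P0)`-differentiable curve on `(-ε, ε)` with tangent `g`:
`P 0 = P0`, the values on `(-ε, ε)` are probability measures, `g ∈ L²(P0)`,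
`‖(2/t)(√(dPₜ/dP0) − 1) − g‖_{L²(P0)} → 0` as `t → 0`, and
`t⁻² · (P0-singular part of Pₜ)(Ω) → 0` as `t → 0`. -/
def IsL2DiffCurve (P0 : Measure Ω) (ε : ℝ) (P : ℝ → Measure Ω) (g : Ω → ℝ) : Prop :=
  0 < ε ∧ P 0 = P0 ∧ (∀ t ∈ Ioo (-ε) ε, IsProbabilityMeasure (P t)) ∧
    MemLp g 2 P0 ∧
    Tendsto (fun t : ℝ =>
        eLpNorm (fun ω => (2 / t) * (Real.sqrt ((P t).rnDeriv P0 ω).toReal - 1) - g ω) 2 P0)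
      (nhdsWithin 0 {0}ᶜ) (nhds 0) ∧
    Tendsto (fun t : ℝ => ENNReal.ofReal (1 / t ^ 2) * (P t).singularPart P0 univ)
      (nhdsWithin 0 {0}ᶜ) (nhds 0)

/-- An `L²(P0)`-differentiable curve taking its values in the model `Ps`. -/
def IsL2DiffCurveIn (Ps : Set (Measure Ω)) (P0 : Measure Ω) (ε : ℝ) (P : ℝ → Measure Ω)
    (g : Ω → ℝ) : Prop :=
  IsL2DiffCurve P0 ε P g ∧ ∀ t ∈ Ioo (-ε) ε, P t ∈ Ps

/-- `K(P0, Ps)`: the set of tangents of all `L²(P0)`-differentiable curves in `Ps`. -/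
def tangentCone (P0 : Measure Ω) (Ps : Set (Measure Ω)) : Set (Ω → ℝ) :=
  {g | ∃ ε P, IsL2DiffCurveIn Ps P0 ε P g}

/-- `A` is dense in `B` with respect to the `L²(P0)`-norm. -/
def DenseInL2 (P0 : Measure Ω) (A B : Set (Ω → ℝ)) : Prop :=
  ∀ h ∈ B, ∀ δ : ℝ, 0 < δ →
    ∃ g ∈ A, eLpNorm (fun ω => h ω - g ω) 2 P0 < ENNReal.ofReal δ

/-- `T(P0, Ps)`: the tangent space, i.e. the `L²(P0)`-closure of `K(P0, Ps)`. -/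
def tangentSpace (P0 : Measure Ω) (Ps : Set (Measure Ω)) : Set (Ω → ℝ) :=
  {h | MemLp h 2 P0 ∧ ∀ δ : ℝ, 0 < δ →
    ∃ g ∈ tangentCone P0 Ps, eLpNorm (fun ω => h ω - g ω) 2 P0 < ENNReal.ofReal δ}

/-- `kd` is a gradient of the statistical functional `k : Ps → ℝ` at `P0`. -/
def IsGradient (Ps : Set (Measure Ω)) (k : Measure Ω → ℝ) (P0 : Measure Ω)
    (kd : Ω → ℝ) : Prop :=
  MemLp kd 2 P0 ∧ (∫ ω, kd ω ∂P0) = 0 ∧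
    ∀ ε P g, IsL2DiffCurveIn Ps P0 ε P g →
      Tendsto (fun t => (k (P t) - k P0) / t) (nhdsWithin 0 (Ioi 0))
        (nhds (∫ ω, kd ω * g ω ∂P0))

/-- `kt` is the canonical gradient of `k` at `P0`: a gradient lying in `T(P0, Ps)`. -/
def IsCanonicalGradient (Ps : Set (Measure Ω)) (k : Measure Ω → ℝ) (P0 : Measure Ω)
    (kt : Ω → ℝ) : Prop :=
  IsGradient Ps k P0 kt ∧ kt ∈ tangentSpace P0 Ps

/-- `N(kt, P0, Ps)`: the orthogonal complement of `kt` in the tangent space. -/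
def orthComplement (P0 : Measure Ω) (Ps : Set (Measure Ω)) (kt : Ω → ℝ) : Set (Ω → ℝ) :=
  {h ∈ tangentSpace P0 Ps | ∫ ω, h ω * kt ω ∂P0 = 0}

/-- The family `𝓕` of implicit alternatives and hypotheses: `Q n = P (tseq n)` for an
`L²(P0)`-differentiable curve `P` in `Ps`, where `tseq n ≥ 0` and `√n · tseq n`
converges to a positive limit. -/
def ImplicitFamily (Ps : Set (Measure Ω)) (P0 : Measure Ω) (Q : ℕ → Measure Ω) : Prop :=
  ∃ (tseq : ℕ → ℝ) (c : ℝ), (∀ n, 0 ≤ tseq n) ∧ 0 < c ∧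
    Tendsto (fun n : ℕ => Real.sqrt n * tseq n) atTop (nhds c) ∧
    ∃ ε P g, IsL2DiffCurveIn Ps P0 ε P g ∧ (∀ n, tseq n ∈ Ioo (-ε) ε) ∧
      ∀ n, P (tseq n) = Q n

/-- The standard normal cumulative distribution function `Φ`. -/
def stdGaussCDF (x : ℝ) : ℝ :=
  ∫ t in Iic x, (Real.sqrt (2 * Real.pi))⁻¹ * Real.exp (-t ^ 2 / 2)

/-- The `L²(P0)`-norm `‖h‖ = (∫ h² dP0)^{1/2}`. -/
def l2norm (P0 : Measure Ω) (h : Ω → ℝ) : ℝ := Real.sqrt (∫ ω, h ω ^ 2 ∂P0)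

/-- The one-sided test `φ₁ₙ`, rejecting iff `n^{-1/2} Σ kt(xᵢ) > c`. -/
def phi1 (kt : Ω → ℝ) (c : ℝ) (n : ℕ) (x : Fin n → Ω) : ℝ :=
  if c < (Real.sqrt n)⁻¹ * ∑ i, kt (x i) then 1 else 0

/-- The two-sided test `φ₂ₙ`, rejecting iff `|n^{-1/2} Σ kt(xᵢ)| > c`. -/
def phi2 (kt : Ω → ℝ) (c : ℝ) (n : ℕ) (x : Fin n → Ω) : ℝ :=
  if c < |(Real.sqrt n)⁻¹ * ∑ i, kt (x i)| then 1 else 0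

/-- The `n`-fold product measure `Pⁿ` on `Ωⁿ`. -/
def productMeasure (P : Measure Ω) (n : ℕ) : Measure (Fin n → Ω) :=
  Measure.pi fun _ => P

end Semipar

/-!
Since `∫ g dP0 = 0`, the normalising constant is `c(tg) = 1 + t² ‖g‖² / 4`, so `s t := c(tg)^{-1/2}`
satisfies `|s t - 1| ≤ ‖g‖² t² / 8`. The root density is `s t · |1 + t g / 2|`; wherever
`1 + t g / 2 ≥ 0` the difference quotient minus `g` equals `(s t - 1) (2 / t + g) = O(t)`, so it
tends to `0` pointwise, and for `|t| ≤ 1` it is dominated by an affine function of `|g| ∈ L²(P0)`.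
Dominated convergence in `L²` concludes; the curve has densities, so no singular part appears.
-/

open scoped Topology ENNReal

theorem tendsto_eLpNorm_of_dominated_convergence {α E ι : Type*} [MeasurableSpace α]
    {μ : Measure α} [NormedAddCommGroup E] {l : Filter ι} [l.IsCountablyGenerated]
    {p : ℝ≥0∞} {F : ι → α → E} {bound : α → ℝ} (hp0 : p ≠ 0) (hp : p ≠ ∞)
    (hF_meas : ∀ᶠ i in l, AEStronglyMeasurable (F i) μ) (h_bound_mem : MemLp bound p μ)
    (h_bound : ∀ᶠ i in l, ∀ᵐ a ∂μ, ‖F i a‖ ≤ bound a)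
    (h_lim : ∀ᵐ a ∂μ, Tendsto (fun i => F i a) l (𝓝 0)) :
    Tendsto (fun i => eLpNorm (F i) p μ) l (𝓝 0) := by
  have hp_pos : 0 < p.toReal := ENNReal.toReal_pos hp0 hp
  have h_int : Tendsto (fun i => ∫⁻ a, ‖F i a‖ₑ ^ p.toReal ∂μ) l (𝓝 0) := by
    simpa [ENNReal.zero_rpow_of_pos hp_pos] using
      tendsto_lintegral_filter_of_dominated_convergence' (f := fun _ => 0)
      (fun a => ‖bound a‖ₑ ^ p.toReal)
      (hF_meas.mono fun i hi => hi.enorm.pow_const _)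
      (h_bound.mono fun i hi => hi.mono fun a ha => ENNReal.rpow_le_rpow
        (by rw [← ofReal_norm, ← ofReal_norm]
            exact ENNReal.ofReal_le_ofReal (ha.trans (le_abs_self _))) hp_pos.le)
      (lintegral_rpow_enorm_lt_top_of_eLpNorm_lt_top hp0 hp h_bound_mem.2).ne
      (h_lim.mono fun a ha => by
        simpa [ENNReal.zero_rpow_of_pos hp_pos] using
          (tendsto_zero_iff_enorm_tendsto_zero.1 ha).ennrpow_const p.toReal)
  simp_rw [eLpNorm_eq_lintegral_rpow_enorm_toReal hp0 hp]
  simpa [ENNReal.zero_rpow_of_pos (inv_pos.2 hp_pos)] using h_int.ennrpow_const (1 / p.toReal)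

theorem abs_sqrt_inv_one_add_sub_one_le {a : ℝ} (ha : 0 ≤ a) : |√((1 + a)⁻¹) - 1| ≤ a / 2 := by
  have h_le : √((1 + a)⁻¹) ≤ 1 := Real.sqrt_le_one.2 (inv_le_one_of_one_le₀ (by linarith))
  have h_sqrt : √(1 + a) ≤ 1 + a / 2 := Real.sqrt_le_iff.2 ⟨by linarith, by nlinarith⟩
  rw [abs_sub_comm, abs_of_nonneg (sub_nonneg.2 h_le), Real.sqrt_inv, sub_le_comm,
    inv_eq_one_div, le_div_iff₀ (Real.sqrt_pos.2 (by linarith))]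
  rcases le_total (a / 2) 1 with h | h
  · calc (1 - a / 2) * √(1 + a) ≤ (1 - a / 2) * (1 + a / 2) := by gcongr
      _ ≤ 1 := by nlinarith
  · nlinarith [Real.sqrt_nonneg (1 + a)]

theorem abs_two_div_mul_abs_one_add_sub_le {s t x K : ℝ} (ht : t ≠ 0) (ht1 : |t| ≤ 1)
    (hs : |s - 1| ≤ K * t ^ 2) :
    |2 / t * (s * |1 + t * x / 2| - 1) - x| ≤ 2 * K + (K + 2) * |x| := by
  have ht0 : 0 < |t| := abs_pos.2 ht
  have hK : 0 ≤ K := nonneg_of_mul_nonneg_left ((abs_nonneg _).trans hs) (by positivity)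
  set X := |1 + t * x / 2|
  have hX : X ≤ 1 + |t| * |x| / 2 := by
    simpa [abs_mul, abs_div] using abs_add_le 1 (t * x / 2)
  have hX1 : |X - 1| ≤ |t| * |x| / 2 := by
    simpa [abs_mul, abs_div] using abs_abs_sub_abs_le_abs_sub (1 + t * x / 2) 1
  have h_split : 2 / t * (s * X - 1) - x = 2 / t * (s - 1) * X + (2 / t * (X - 1) - x) := by
    field_simp; ring
  have h1 : |2 / t * (s - 1) * X| ≤ 2 * K * |t| * (1 + |t| * |x| / 2) := by
    rw [abs_mul, abs_mul, abs_div, abs_two, abs_of_nonneg (abs_nonneg _)]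
    calc 2 / |t| * |s - 1| * X ≤ 2 / |t| * (K * t ^ 2) * (1 + |t| * |x| / 2) := by gcongr
      _ = 2 * K * |t| * (1 + |t| * |x| / 2) := by rw [← sq_abs]; field_simp
  have h2 : |2 / t * (X - 1) - x| ≤ 2 * |x| := by
    calc |2 / t * (X - 1) - x| ≤ 2 / |t| * |X - 1| + |x| := by
          simpa [abs_mul, abs_div] using abs_sub (2 / t * (X - 1)) x
      _ ≤ 2 / |t| * (|t| * |x| / 2) + |x| := by gcongr
      _ = 2 * |x| := by field_simp; ring
  rw [h_split]
  calc _ ≤ 2 * K * |t| * (1 + |t| * |x| / 2) + 2 * |x| := (abs_add_le _ _).trans (add_le_add h1 h2)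
    _ ≤ 2 * K * 1 * (1 + 1 * |x| / 2) + 2 * |x| := by gcongr
    _ = 2 * K + (K + 2) * |x| := by ring

theorem tendsto_two_div_mul_abs_one_add_sub {s : ℝ → ℝ} {K : ℝ}
    (hs : ∀ t, |s t - 1| ≤ K * t ^ 2) (x : ℝ) :
    Tendsto (fun t => 2 / t * (s t * |1 + t * x / 2| - 1) - x) (𝓝[≠] 0) (𝓝 0) := by
  have h_sub : Tendsto (fun t => s t - 1) (𝓝[≠] 0) (𝓝 0) := by
    refine (squeeze_zero_norm hs ?_).mono_left nhdsWithin_le_nhds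
    simpa using ((continuous_pow 2).const_mul K).tendsto (0 : ℝ)
  have h_slope : Tendsto (fun t => (s t - 1) / t) (𝓝[≠] 0) (𝓝 0) := by
    refine squeeze_zero_norm' (a := fun t => K * |t|) ?_ ?_
    · filter_upwards [self_mem_nhdsWithin] with t ht
      rw [Real.norm_eq_abs, abs_div, div_le_iff₀ (abs_pos.2 ht), mul_assoc, ← sq, sq_abs]
      exact hs t
    · simpa using ((continuous_abs.const_mul K).tendsto (0 : ℝ)).mono_left nhdsWithin_le_nhds
  have h_pos : ∀ᶠ t in 𝓝[≠] (0 : ℝ), 0 < 1 + t * x / 2 := by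
    have h_lim : Tendsto (fun t : ℝ => 1 + t * x / 2) (𝓝 0) (𝓝 1) :=
      Continuous.tendsto' (by fun_prop) 0 1 (by simp)
    exact (h_lim.eventually_const_lt one_pos).filter_mono nhdsWithin_le_nhds
  have h_eq : (fun t => 2 * ((s t - 1) / t) + (s t - 1) * x)
      =ᶠ[𝓝[≠] 0] fun t => 2 / t * (s t * |1 + t * x / 2| - 1) - x := by
    filter_upwards [self_mem_nhdsWithin, h_pos] with t ht hpos
    rw [abs_of_pos hpos]
    field_simp [show t ≠ 0 from ht]
    ring
  simpa using ((h_slope.const_mul 2).add (h_sub.mul_const x)).congr' h_eq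

theorem tendsto_eLpNorm_two_div_mul_abs_one_add_sub {Ω : Type*} [MeasurableSpace Ω]
    {μ : Measure Ω} [IsFiniteMeasure μ] {g : Ω → ℝ} (hg : MemLp g 2 μ) {s : ℝ → ℝ} {K : ℝ}
    (hs : ∀ t, |s t - 1| ≤ K * t ^ 2) :
    Tendsto (fun t => eLpNorm (fun ω => 2 / t * (s t * |1 + t * g ω / 2| - 1) - g ω) 2 μ)
      (𝓝[≠] 0) (𝓝 0) := by
  have h_bound_mem : MemLp (fun ω => 2 * K + (K + 2) * |g ω|) 2 μ :=
    (memLp_const (2 * K)).add (by simpa only [Real.norm_eq_abs] using hg.norm.const_mul (K + 2))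
  refine tendsto_eLpNorm_of_dominated_convergence two_ne_zero ENNReal.ofNat_ne_top
    (Eventually.of_forall fun t => ?_) h_bound_mem ?_
    (ae_of_all _ fun ω => tendsto_two_div_mul_abs_one_add_sub hs (g ω))
  · exact Continuous.comp_aestronglyMeasurable
      (g := fun y => 2 / t * (s t * |1 + t * y / 2| - 1) - y) (by fun_prop) hg.1
  · filter_upwards [self_mem_nhdsWithin, nhdsWithin_le_nhds (Icc_mem_nhds neg_one_lt_zero one_pos)]
      with t ht ht1
    exact ae_of_all _ fun ω => abs_two_div_mul_abs_one_add_sub_le ht (abs_le.2 ht1) (hs t)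

theorem integral_one_add_mul_div_two_sq {Ω : Type*} [MeasurableSpace Ω] {μ : Measure Ω}
    [IsProbabilityMeasure μ] {g : Ω → ℝ} (hg : MemLp g 2 μ) (hg0 : ∫ ω, g ω ∂μ = 0) (t : ℝ) :
    ∫ ω, (1 + t * g ω / 2) ^ 2 ∂μ = 1 + t ^ 2 * (∫ ω, g ω ^ 2 ∂μ) / 4 := by
  have hg1 : Integrable g μ := hg.integrable one_le_two
  have hg2 : Integrable (fun ω => g ω ^ 2) μ := hg.integrable_sq
  have h_expand :
      (fun ω => (1 + t * g ω / 2) ^ 2) = fun ω => 1 + t * g ω + t ^ 2 / 4 * g ω ^ 2 := by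
    ext ω; ring
  have h_lin : Integrable (fun ω => 1 + t * g ω) μ := (integrable_const 1).add (hg1.const_mul t)
  rw [h_expand, integral_add h_lin (hg2.const_mul _),
    integral_add (integrable_const 1) (hg1.const_mul t), integral_const_mul, integral_const_mul,
    hg0]
  simp only [integral_const, probReal_univ, smul_eq_mul]
  ring

theorem toReal_rnDeriv_withDensity_ofReal {α : Type*} [MeasurableSpace α] {μ : Measure α}
    [SigmaFinite μ] {f : α → ℝ} (hf : AEMeasurable f μ) (hf0 : 0 ≤ᵐ[μ] f) :
    (fun ω => ((μ.withDensity fun ω => ENNReal.ofReal (f ω)).rnDeriv μ ω).toReal) =ᵐ[μ] f := by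
  filter_upwards [Measure.rnDeriv_withDensity₀ μ hf.ennreal_ofReal, hf0] with ω hω hω0
  rw [hω, ENNReal.toReal_ofReal hω0]

theorem isProbabilityMeasure_withDensity_inv_integral_mul {α : Type*} [MeasurableSpace α]
    {μ : Measure α} {f : α → ℝ} (hf : Integrable f μ) (hf0 : 0 ≤ᵐ[μ] f) (h : ∫ x, f x ∂μ ≠ 0) :
    IsProbabilityMeasure (μ.withDensity fun ω => ENNReal.ofReal ((∫ x, f x ∂μ)⁻¹ * f ω)) := by
  have h_nonneg : 0 ≤ᵐ[μ] fun ω => (∫ x, f x ∂μ)⁻¹ * f ω := by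
    filter_upwards [hf0] with ω hω
    exact mul_nonneg (inv_nonneg.2 (integral_nonneg_of_ae hf0)) hω
  constructor
  rw [withDensity_apply _ MeasurableSet.univ, Measure.restrict_univ,
    ← ofReal_integral_eq_lintegral_ofReal (hf.const_mul _) h_nonneg, integral_const_mul,
    inv_mul_cancel₀ h, ENNReal.ofReal_one]

/-- for `g ∈ L²(P0)` with `∫ g dP0 = 0`, the curve
`t ↦ P_{tg} = c(tg)⁻¹ (1 + t g/2)² · P0` (with `c(tg) = ∫ (1 + t g/2)² dP0`), defined for
all `t ∈ ℝ`, is `L²(P0)`-differentiable with tangent `g`. -/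
theorem statement_11 {Ω : Type*} [MeasurableSpace Ω] (P0 : Measure Ω)
    [IsProbabilityMeasure P0] (g : Ω → ℝ) (hg : MemLp g 2 P0)
    (hg0 : ∫ ω, g ω ∂P0 = 0) (ε : ℝ) (hε : 0 < ε) :
    Semipar.IsL2DiffCurve P0 ε
      (fun t => P0.withDensity fun ω =>
        ENNReal.ofReal ((∫ x, (1 + t * g x / 2) ^ 2 ∂P0)⁻¹ * (1 + t * g ω / 2) ^ 2)) g := by
  set m := ∫ ω, g ω ^ 2 ∂P0
  have hm : 0 ≤ m := integral_nonneg fun ω => sq_nonneg _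
  have hc : ∀ t : ℝ, ∫ x, (1 + t * g x / 2) ^ 2 ∂P0 = 1 + t ^ 2 * m / 4 :=
    integral_one_add_mul_div_two_sq hg hg0
  have h_memLp : ∀ t : ℝ, MemLp (fun ω => 1 + t * g ω / 2) 2 P0 := by
    intro t
    convert (memLp_const (1 : ℝ)).add (hg.const_mul (t / 2)) using 1
    ext ω
    simp only [Pi.add_apply]
    ring
  refine ⟨hε, ?_, fun t _ => ?_, hg, ?_, ?_⟩
  · simp
  · exact isProbabilityMeasure_withDensity_inv_integral_mul (h_memLp t).integrable_sq
      (ae_of_all _ fun ω => sq_nonneg _) (by rw [hc]; positivity)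
  · have h_sqrt : ∀ t : ℝ, |√((1 + t ^ 2 * m / 4)⁻¹) - 1| ≤ m / 8 * t ^ 2 := fun t => by
      linarith [abs_sqrt_inv_one_add_sub_one_le (a := t ^ 2 * m / 4) (by positivity)]
    refine (tendsto_eLpNorm_two_div_mul_abs_one_add_sub hg h_sqrt).congr fun t =>
      eLpNorm_congr_ae ?_
    have h_density_nonneg : ∀ ω, 0 ≤ (∫ x, (1 + t * g x / 2) ^ 2 ∂P0)⁻¹ * (1 + t * g ω / 2) ^ 2 :=
      fun ω => mul_nonneg (inv_nonneg.2 (integral_nonneg fun _ => sq_nonneg _)) (sq_nonneg _)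
    filter_upwards [toReal_rnDeriv_withDensity_ofReal
      (((h_memLp t).1.aemeasurable.pow_const 2).const_mul _) (ae_of_all _ h_density_nonneg)]
      with ω hω
    rw [hω, hc, Real.sqrt_mul (by positivity), Real.sqrt_sq_eq_abs]
  · simp [Measure.singularPart_eq_zero_of_ac (withDensity_absolutelyContinuous _ _)]
end
end

section
/- For every g ∈ L²(P0), lim_{t→0} ‖ (2/t)(|1 + (t/2)g| − 1) − g ‖_{L²(P0)} = 0. -/
open MeasureTheory Filter Set

noncomputable section

/-!
Pointwise, `(2/t)(|1 + (t/2) g| − 1) = g` as soon as `|t g| < 2`, and the difference is bounded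
by `2|g| ∈ L²(P0)` for every `t` (the absolute value is 1-Lipschitz). Dominated convergence in
`L²` then gives the limit.
-/

open Topology

theorem tendsto_eLpNorm_zero_of_dominated {α ι E : Type*} [MeasurableSpace α] {μ : Measure α}
    [NormedAddCommGroup E] {l : Filter ι} [l.IsCountablyGenerated] {p : ENNReal}
    (hp0 : p ≠ 0) (hp : p ≠ ⊤) {F : ι → α → E} {G : α → ℝ}
    (hF : ∀ᶠ i in l, AEStronglyMeasurable (F i) μ) (hG : MemLp G p μ)
    (h_bound : ∀ᶠ i in l, ∀ᵐ a ∂μ, ‖F i a‖ ≤ G a)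
    (h_lim : ∀ᵐ a ∂μ, Tendsto (fun i => F i a) l (𝓝 0)) :
    Tendsto (fun i => eLpNorm (F i) p μ) l (𝓝 0) := by
  have hp_pos : 0 < p.toReal := ENNReal.toReal_pos hp0 hp
  have h_int : Tendsto (fun i => ∫⁻ a, ‖F i a‖ₑ ^ p.toReal ∂μ) l (𝓝 0) := by
    simpa using tendsto_lintegral_filter_of_dominated_convergence' (f := fun _ => 0)
      (fun a => ‖G a‖ₑ ^ p.toReal)
      (hF.mono fun i hi => hi.enorm.pow_const _)
      (h_bound.mono fun i hi => hi.mono fun a ha =>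
        ENNReal.rpow_le_rpow (enorm_le_iff_norm_le.mpr (ha.trans (Real.le_norm_self _))) hp_pos.le)
      (lintegral_rpow_enorm_lt_top_of_eLpNorm_lt_top hp0 hp hG.eLpNorm_lt_top).ne
      (h_lim.mono fun a ha => by simpa [hp_pos] using ha.enorm.ennrpow_const p.toReal)
  simp_rw [eLpNorm_eq_lintegral_rpow_enorm_toReal hp0 hp]
  simpa [hp_pos] using h_int.ennrpow_const (1 / p.toReal)

theorem abs_two_div_mul_abs_one_add_sub_one_sub_le (t x : ℝ) :
    |2 / t * (|1 + t / 2 * x| - 1) - x| ≤ 2 * |x| := by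
  rcases eq_or_ne t 0 with rfl | ht
  · simpa using le_mul_of_one_le_left (abs_nonneg x) one_le_two
  have h_lip : |(|1 + t / 2 * x| - 1)| ≤ |t / 2 * x| := by
    simpa using abs_abs_sub_abs_le_abs_sub (1 + t / 2 * x) 1
  calc |2 / t * (|1 + t / 2 * x| - 1) - x|
      ≤ |2 / t| * |(|1 + t / 2 * x| - 1)| + |x| := by rw [← abs_mul]; exact abs_sub _ _
    _ ≤ |2 / t| * |t / 2 * x| + |x| := by gcongr
    _ = 2 * |x| := by
      rw [← abs_mul, ← mul_assoc, show 2 / t * (t / 2) = 1 by field_simp, one_mul, two_mul]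

theorem eventually_two_div_mul_abs_one_add_sub_one_eq (x : ℝ) :
    ∀ᶠ t in 𝓝[≠] 0, 2 / t * (|1 + t / 2 * x| - 1) = x := by
  have h_pos : ∀ᶠ t in 𝓝 (0 : ℝ), 0 < 1 + t / 2 * x :=
    (continuous_const.add ((continuous_id.div_const 2).mul continuous_const)).tendsto' 0 1
      (by simp) |>.eventually (lt_mem_nhds one_pos)
  filter_upwards [nhdsWithin_le_nhds h_pos, self_mem_nhdsWithin] with t ht (ht0 : t ≠ 0)
  rw [abs_of_pos ht]
  field_simp
  ring

theorem statement_12_general {Ω : Type*} [MeasurableSpace Ω] (P0 : Measure Ω)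
    (g : Ω → ℝ) (hg : MemLp g 2 P0) :
    Tendsto (fun t : ℝ =>
        eLpNorm (fun ω => (2 / t) * (|1 + (t / 2) * g ω| - 1) - g ω) 2 P0)
      (nhdsWithin 0 {0}ᶜ) (nhds 0) := by
  refine tendsto_eLpNorm_zero_of_dominated two_ne_zero ENNReal.ofNat_ne_top
    (G := fun ω => 2 * |g ω|) ?_ (hg.abs.const_mul 2) ?_ ?_
  · exact Eventually.of_forall fun t =>
      (show Continuous fun y : ℝ => 2 / t * (|1 + t / 2 * y| - 1) - y by fun_prop)
        |>.comp_aestronglyMeasurable hg.1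
  · exact Eventually.of_forall fun t => ae_of_all _ fun ω => by
      simpa using abs_two_div_mul_abs_one_add_sub_one_sub_le t (g ω)
  · refine ae_of_all _ fun ω => tendsto_const_nhds.congr' ?_
    filter_upwards [eventually_two_div_mul_abs_one_add_sub_one_eq (g ω)] with t ht
    rw [ht, sub_self]

/-- for every `g ∈ L²(P0)`,
`lim_{t→0} ‖(2/t)(|1 + (t/2) g| − 1) − g‖_{L²(P0)} = 0`. -/
theorem statement_12 {Ω : Type*} [MeasurableSpace Ω] (P0 : Measure Ω)
    [IsProbabilityMeasure P0] (g : Ω → ℝ) (hg : MemLp g 2 P0) :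
    Tendsto (fun t : ℝ =>
        eLpNorm (fun ω => (2 / t) * (|1 + (t / 2) * g ω| - 1) - g ω) 2 P0)
      (nhdsWithin 0 {0}ᶜ) (nhds 0) :=
  statement_12_general P0 g hg
end
end

section
/- Let K be a linear subspace of a real Hilbert space H, let T be the closure of K, let k̃ ∈ T, and let N := {h ∈ T : ⟨h, k̃⟩ = 0}. Then K ∩ N is dense in N. -/
open scoped RealInnerProductSpace

/-
`N = T ∩ ker f` for the continuous functional `f = ⟪·, k̃⟫`. If `f` vanishes on `K`, then
`K ∩ N = K`, which is dense in `T ⊇ N`. Otherwise pick `k ∈ K` with `f k ≠ 0`: the continuous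
projection `x ↦ x - (f x / f k) • k` fixes `ker f` and maps `K` into `K ∩ ker f`, hence maps
`T ∩ ker f` into the closure of `K ∩ ker f`.
-/

theorem Submodule.closure_inter_preimage_zero_subset {𝕜 E : Type*} [Field 𝕜]
    [TopologicalSpace 𝕜] [IsTopologicalRing 𝕜] [AddCommGroup E] [Module 𝕜 E]
    [TopologicalSpace E] [IsTopologicalAddGroup E] [ContinuousSMul 𝕜 E]
    (K : Submodule 𝕜 E) (f : E →L[𝕜] 𝕜) :
    closure (K : Set E) ∩ f ⁻¹' {0} ⊆ closure ((K : Set E) ∩ f ⁻¹' {0}) := by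
  by_cases hfK : ∀ k ∈ K, f k = 0
  · rintro h ⟨hT, -⟩
    exact closure_mono (Set.subset_inter subset_rfl hfK) hT
  push Not at hfK
  obtain ⟨k, hkK, hfk⟩ := hfK
  let φ : E →L[𝕜] E := .id 𝕜 E - ((f k)⁻¹ • f).smulRight k
  have hφ_apply (x : E) : φ x = x - ((f k)⁻¹ * f x) • k := rfl
  have hφ_ker : ∀ x, f x = 0 → φ x = x := by
    intro x hx
    simp [hφ_apply, hx]
  have hφ_K : Set.MapsTo φ K (K ∩ f ⁻¹' {0}) := by
    intro x hx
    refine ⟨K.sub_mem hx (K.smul_mem _ hkK), ?_⟩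
    simp only [Set.mem_preimage, Set.mem_singleton_iff, hφ_apply, map_sub, map_smul, smul_eq_mul]
    field_simp
    ring
  rintro h ⟨hT, hh⟩
  rw [← hφ_ker h hh]
  exact map_mem_closure φ.continuous hT hφ_K

theorem statement_16_general {H : Type*} [NormedAddCommGroup H] [InnerProductSpace ℝ H]
    (K : Submodule ℝ H) (kt : H) :
    {h : H | h ∈ closure (K : Set H) ∧ ⟪h, kt⟫ = 0} ⊆
      closure ((K : Set H) ∩ {h : H | h ∈ closure (K : Set H) ∧ ⟪h, kt⟫ = 0}) := by
  have hN : {h : H | h ∈ closure (K : Set H) ∧ ⟪h, kt⟫ = 0} =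
      closure (K : Set H) ∩ innerSL ℝ kt ⁻¹' {0} := by
    ext h
    simp [real_inner_comm]
  rw [hN, ← Set.inter_assoc, Set.inter_eq_left.mpr subset_closure]
  exact K.closure_inter_preimage_zero_subset _

/-- let `K` be a linear subspace of a real Hilbert space `H`, `T` the
closure of `K`, `k̃ ∈ T`, and `N = {h ∈ T : ⟪h, k̃⟫ = 0}`. Then `K ∩ N` is dense in `N`,
i.e. `N` is contained in the closure of `K ∩ N`. -/
theorem statement_16 {H : Type*} [NormedAddCommGroup H] [InnerProductSpace ℝ H]
    [CompleteSpace H] (K : Submodule ℝ H) (kt : H) (hkt : kt ∈ closure (K : Set H)) :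
    {h : H | h ∈ closure (K : Set H) ∧ ⟪h, kt⟫ = 0} ⊆
      closure ((K : Set H) ∩ {h : H | h ∈ closure (K : Set H) ∧ ⟪h, kt⟫ = 0}) :=
  statement_16_general K kt
end
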